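/- arXiv:1903.00801 — 2 statements merged into one kernel-verified Lean document; each statement's English description precedes it below -/
import Mathlib

section
/- Let B = k[z,w]/(zw). A B-linear endomorphism φ of B/(w) factors through a finitely generated free B-module (i.e., is a composite B/(w) → Bⁿ → B/(w) of B-linear maps for some n) if and only if φ(1̄) lies in the submodule z·(B/(w)) of B/(w). -/
set_option synthInstance.maxHeartbeats 1000000
set_option maxHeartbeats 1000000

/-- `B = k[z,w]/(zw)`, where `z = X 0` and `w = X 1`. -/
abbrev B (k : Type*) [Field k] : Type _ :=
  MvPolynomial (Fin 2) k ⧸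
    Ideal.span {(MvPolynomial.X 0 : MvPolynomial (Fin 2) k) * MvPolynomial.X 1}

/-- The class of `z` in `B`. -/
noncomputable abbrev zB (k : Type*) [Field k] : B k :=
  Ideal.Quotient.mk _ (MvPolynomial.X 0)

/-- The class of `w` in `B`. -/
noncomputable abbrev wB (k : Type*) [Field k] : B k :=
  Ideal.Quotient.mk _ (MvPolynomial.X 1)

/-- `B/(w)`. -/
abbrev Bw (k : Type*) [Field k] : Type _ := B k ⧸ Ideal.span {wB k}

/-- `B/(z)`. -/
abbrev Bz (k : Type*) [Field k] : Type _ := B k ⧸ Ideal.span {zB k}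

/-!
The annihilator of `w` in `B` is `z B`, so a linear map `B/(w) → Bⁿ` sends `1̄` (which `w` kills)
into `z Bⁿ`; hence any composite `B/(w) → Bⁿ → B/(w)` sends `1̄` into `z (B/(w))`. Conversely,
since `w z = 0`, multiplication by `c z` descends to a map `B/(w) → B`, and its composite with the
projection `B → B/(w)` is the endomorphism `1̄ ↦ c z̄`.
-/

section QuotientByPrincipal

variable {R : Type*} [CommRing R] {w z : R}

lemma comp_apply_one_mem_span_mk (hann : ∀ b, w * b = 0 → z ∣ b) {ι : Type*}
    (g : R ⧸ Ideal.span {w} →ₗ[R] (ι → R)) (h : (ι → R) →ₗ[R] R ⧸ Ideal.span {w}) :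
    h (g 1) ∈ Ideal.span {Ideal.Quotient.mk (Ideal.span {w}) z} := by
  have hw : w • g 1 = 0 := by
    rw [← map_smul, Algebra.smul_def, mul_one, Ideal.Quotient.algebraMap_eq,
      Ideal.Quotient.eq_zero_iff_mem.mpr (Ideal.mem_span_singleton_self w), map_zero]
  choose v hv using fun i => hann (g 1 i) (congrFun hw i)
  have hg : g 1 = z • v := funext hv
  rw [hg, map_smul, Algebra.smul_def]
  exact Ideal.mul_mem_right _ _ (Ideal.mem_span_singleton_self _)

lemma exists_mkQ_comp_eq_of_mem_span_mk (hwz : w * z = 0)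
    (φ : R ⧸ Ideal.span {w} →ₗ[R] R ⧸ Ideal.span {w})
    (hφ : φ 1 ∈ Ideal.span {Ideal.Quotient.mk (Ideal.span {w}) z}) :
    ∃ g : R ⧸ Ideal.span {w} →ₗ[R] R, (Ideal.span {w}).mkQ ∘ₗ g = φ := by
  obtain ⟨a, ha⟩ := Ideal.mem_span_singleton'.mp hφ
  obtain ⟨c, rfl⟩ := Ideal.Quotient.mk_surjective a
  have hker : Ideal.span {w} ≤ LinearMap.ker (LinearMap.toSpanSingleton R R (c * z)) := by
    rw [Ideal.span_le, Set.singleton_subset_iff, SetLike.mem_coe, LinearMap.mem_ker,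
      LinearMap.toSpanSingleton_apply, smul_eq_mul, mul_left_comm, hwz, mul_zero]
  refine ⟨(Ideal.span {w}).liftQ _ hker, Submodule.linearMap_qext _ (LinearMap.ext_ring ?_)⟩
  rw [LinearMap.comp_assoc, Submodule.liftQ_mkQ]
  simp [← ha]

theorem factors_through_pi_iff (hann : ∀ b, w * b = 0 ↔ z ∣ b)
    (φ : R ⧸ Ideal.span {w} →ₗ[R] R ⧸ Ideal.span {w}) :
    (∃ (n : ℕ) (g : R ⧸ Ideal.span {w} →ₗ[R] (Fin n → R))
        (h : (Fin n → R) →ₗ[R] R ⧸ Ideal.span {w}), φ = h.comp g) ↔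
      φ 1 ∈ Ideal.span {Ideal.Quotient.mk (Ideal.span {w}) z} := by
  constructor
  · rintro ⟨n, g, h, rfl⟩
    exact comp_apply_one_mem_span_mk (fun b => (hann b).mp) g h
  · intro hφ
    obtain ⟨g, hg⟩ := exists_mkQ_comp_eq_of_mem_span_mk ((hann z).mpr dvd_rfl) φ hφ
    refine ⟨1, (LinearEquiv.funUnique (Fin 1) R R).symm.toLinearMap ∘ₗ g,
      (Ideal.span {w}).mkQ ∘ₗ (LinearEquiv.funUnique (Fin 1) R R).toLinearMap, ?_⟩
    rw [← hg]
    ext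
    simp

end QuotientByPrincipal

lemma wB_mul_eq_zero_iff {k : Type*} [Field k] (b : B k) : wB k * b = 0 ↔ zB k ∣ b := by
  constructor
  · intro hb
    obtain ⟨f, rfl⟩ := Ideal.Quotient.mk_surjective b
    rw [← map_mul, Ideal.Quotient.eq_zero_iff_mem, Ideal.mem_span_singleton] at hb
    obtain ⟨q, hq⟩ := hb
    have hf : f = MvPolynomial.X 0 * q := by
      refine mul_left_cancel₀ (MvPolynomial.X_ne_zero 1) ?_
      rw [hq]
      ring
    exact ⟨Ideal.Quotient.mk _ q, by rw [hf, map_mul]⟩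
  · rintro ⟨c, rfl⟩
    rw [← mul_assoc, ← map_mul, Ideal.Quotient.eq_zero_iff_mem.mpr, zero_mul]
    exact Ideal.mem_span_singleton.mpr ⟨1, by ring⟩

theorem stmt6_general (k : Type*) [Field k]
    (φ : Bw k →ₗ[B k] Bw k) :
    (∃ (n : ℕ) (g : Bw k →ₗ[B k] (Fin n → B k)) (h : (Fin n → B k) →ₗ[B k] Bw k),
        φ = h.comp g) ↔
      φ 1 ∈ Ideal.span {(Ideal.Quotient.mk (Ideal.span {wB k}) (zB k) : Bw k)} :=
  factors_through_pi_iff wB_mul_eq_zero_iff φ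

/-- A `B`-linear endomorphism `φ` of `B/(w)` factors through a finitely generated free
`B`-module if and only if `φ(1̄)` lies in `z·(B/(w))`. -/
theorem stmt6 (k : Type*) [Field k] [IsAlgClosed k] [CharZero k]
    (φ : Bw k →ₗ[B k] Bw k) :
    (∃ (n : ℕ) (g : Bw k →ₗ[B k] (Fin n → B k)) (h : (Fin n → B k) →ₗ[B k] Bw k),
        φ = h.comp g) ↔
      φ 1 ∈ Ideal.span {(Ideal.Quotient.mk (Ideal.span {wB k}) (zB k) : Bw k)} :=
  stmt6_general k φ
end

section
/- Let T = k[x,y,z,w]/(xy+zw) and define T-linear maps φ, ψ : T² → T² by φ(a,b) = (xa + wb, za − yb) and ψ(a,b) = (ya + wb, za − xb). Then φ∘ψ = ψ∘φ = 0, the kernel of φ equals the image of ψ, and the kernel of ψ equals the image of φ; i.e., the 2-periodic complex ⋯ → T² →ψ T² →φ T² →ψ T² → ⋯ is exact. -/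
set_option synthInstance.maxHeartbeats 1000000
set_option maxHeartbeats 1000000

noncomputable section

/-- `T = k[x,y,z,w]/(xy+zw)`, with `x = X 0`, `y = X 1`, `z = X 2`, `w = X 3`. -/
abbrev T (k : Type*) [Field k] : Type _ :=
  MvPolynomial (Fin 4) k ⧸
    Ideal.span {(MvPolynomial.X 0 : MvPolynomial (Fin 4) k) * MvPolynomial.X 1 +
      MvPolynomial.X 2 * MvPolynomial.X 3}

/-- The class of `x` in `T`. -/
abbrev xT (k : Type*) [Field k] : T k := Ideal.Quotient.mk _ (MvPolynomial.X 0)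

/-- The class of `y` in `T`. -/
abbrev yT (k : Type*) [Field k] : T k := Ideal.Quotient.mk _ (MvPolynomial.X 1)

/-- The class of `z` in `T`. -/
abbrev zT (k : Type*) [Field k] : T k := Ideal.Quotient.mk _ (MvPolynomial.X 2)

/-- The class of `w` in `T`. -/
abbrev wT (k : Type*) [Field k] : T k := Ideal.Quotient.mk _ (MvPolynomial.X 3)

/-- `φ : T² → T²`, `φ(a,b) = (xa + wb, za − yb)`. -/
def phiT (k : Type*) [Field k] : (T k × T k) →ₗ[T k] (T k × T k) :=
  LinearMap.prod (xT k • LinearMap.fst _ _ _ + wT k • LinearMap.snd _ _ _)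
    (zT k • LinearMap.fst _ _ _ - yT k • LinearMap.snd _ _ _)

/-- `ψ : T² → T²`, `ψ(a,b) = (ya + wb, za − xb)`. -/
def psiT (k : Type*) [Field k] : (T k × T k) →ₗ[T k] (T k × T k) :=
  LinearMap.prod (yT k • LinearMap.fst _ _ _ + wT k • LinearMap.snd _ _ _)
    (zT k • LinearMap.fst _ _ _ - xT k • LinearMap.snd _ _ _)

/-- For the matrix factorization `(φ, ψ)` of `xy+zw` on `T = k[x,y,z,w]/(xy+zw)`:
`φ∘ψ = ψ∘φ = 0`, `ker φ = im ψ` and `ker ψ = im φ`, i.e. the 2-periodic complex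
`⋯ → T² →ψ T² →φ T² → ⋯` is exact. -/
theorem stmt14 (k : Type*) [Field k] [IsAlgClosed k] [CharZero k] :
    (∀ a b : T k, phiT k (a, b) = (xT k * a + wT k * b, zT k * a - yT k * b)) ∧
    (∀ a b : T k, psiT k (a, b) = (yT k * a + wT k * b, zT k * a - xT k * b)) ∧
    (phiT k).comp (psiT k) = 0 ∧
    (psiT k).comp (phiT k) = 0 ∧
    LinearMap.ker (phiT k) = LinearMap.range (psiT k) ∧
    LinearMap.ker (psiT k) = LinearMap.range (phiT k) := by

  classical
  set f : MvPolynomial (Fin 4) k :=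
    MvPolynomial.X 0 * MvPolynomial.X 1 + MvPolynomial.X 2 * MvPolynomial.X 3 with hf
  have hf0 : f ≠ 0 := by
    intro h
    have h2 := congrArg (MvPolynomial.eval (fun _ => (1 : k))) h
    simp [hf] at h2
  have hrel : xT k * yT k + zT k * wT k = 0 := by
    have h0 : (Ideal.Quotient.mk (Ideal.span {f})) f = 0 :=
      Ideal.Quotient.eq_zero_iff_mem.mpr (Ideal.subset_span rfl)
    simpa [hf, map_add, map_mul] using h0
  have hphi : ∀ a b : T k, phiT k (a, b) = (xT k * a + wT k * b, zT k * a - yT k * b) := by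
    intro a b; simp [phiT, smul_eq_mul]
  have hpsi : ∀ a b : T k, psiT k (a, b) = (yT k * a + wT k * b, zT k * a - xT k * b) := by
    intro a b; simp [psiT, smul_eq_mul]
  have hcomp1 : (phiT k).comp (psiT k) = 0 := by
    apply LinearMap.ext
    rintro ⟨a, b⟩
    rw [LinearMap.comp_apply, hpsi, hphi]
    have e1 : xT k * (yT k * a + wT k * b) + wT k * (zT k * a - xT k * b) = 0 := by
      linear_combination a * hrel
    have e2 : zT k * (yT k * a + wT k * b) - yT k * (zT k * a - xT k * b) = 0 := by
      linear_combination b * hrel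
    simp [Prod.ext_iff, e1, e2]
  have hcomp2 : (psiT k).comp (phiT k) = 0 := by
    apply LinearMap.ext
    rintro ⟨a, b⟩
    rw [LinearMap.comp_apply, hphi, hpsi]
    have e1 : yT k * (xT k * a + wT k * b) + wT k * (zT k * a - yT k * b) = 0 := by
      linear_combination a * hrel
    have e2 : zT k * (xT k * a + wT k * b) - xT k * (zT k * a - yT k * b) = 0 := by
      linear_combination b * hrel
    simp [Prod.ext_iff, e1, e2]
  refine ⟨hphi, hpsi, hcomp1, hcomp2, ?_, ?_⟩
  · -- ker φ = range ψ
    apply le_antisymm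
    · rintro ⟨a, b⟩ hab
      rw [LinearMap.mem_ker, hphi, Prod.ext_iff] at hab
      obtain ⟨h1, h2⟩ := hab
      obtain ⟨A, rfl⟩ := Ideal.Quotient.mk_surjective a
      obtain ⟨B, rfl⟩ := Ideal.Quotient.mk_surjective b
      have h1' : f ∣ (MvPolynomial.X 0 * A + MvPolynomial.X 3 * B) := by
        rw [← Ideal.mem_span_singleton, ← Ideal.Quotient.eq_zero_iff_mem]
        simpa [map_add, map_mul] using h1
      have h2' : f ∣ (MvPolynomial.X 2 * A - MvPolynomial.X 1 * B) := by
        rw [← Ideal.mem_span_singleton, ← Ideal.Quotient.eq_zero_iff_mem]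
        simpa [map_sub, map_mul] using h2
      obtain ⟨P, hP⟩ := h1'
      obtain ⟨Q, hQ⟩ := h2'
      rw [hf] at hP hQ
      have hA : A = MvPolynomial.X 1 * P + MvPolynomial.X 3 * Q := by
        apply mul_left_cancel₀ hf0
        rw [hf]
        linear_combination MvPolynomial.X 1 * hP + MvPolynomial.X 3 * hQ
      have hB : B = MvPolynomial.X 2 * P - MvPolynomial.X 0 * Q := by
        apply mul_left_cancel₀ hf0
        rw [hf]
        linear_combination MvPolynomial.X 2 * hP - MvPolynomial.X 0 * hQ
      refine ⟨(Ideal.Quotient.mk _ P, Ideal.Quotient.mk _ Q), ?_⟩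
      rw [hpsi, hA, hB]
      simp [Prod.ext_iff, map_add, map_sub, map_mul]
    · rintro v ⟨p, rfl⟩
      rw [LinearMap.mem_ker, ← LinearMap.comp_apply, hcomp1]
      rfl
  · -- ker ψ = range φ
    apply le_antisymm
    · rintro ⟨a, b⟩ hab
      rw [LinearMap.mem_ker, hpsi, Prod.ext_iff] at hab
      obtain ⟨h1, h2⟩ := hab
      obtain ⟨A, rfl⟩ := Ideal.Quotient.mk_surjective a
      obtain ⟨B, rfl⟩ := Ideal.Quotient.mk_surjective b
      have h1' : f ∣ (MvPolynomial.X 1 * A + MvPolynomial.X 3 * B) := by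
        rw [← Ideal.mem_span_singleton, ← Ideal.Quotient.eq_zero_iff_mem]
        simpa [map_add, map_mul] using h1
      have h2' : f ∣ (MvPolynomial.X 2 * A - MvPolynomial.X 0 * B) := by
        rw [← Ideal.mem_span_singleton, ← Ideal.Quotient.eq_zero_iff_mem]
        simpa [map_sub, map_mul] using h2
      obtain ⟨P, hP⟩ := h1'
      obtain ⟨Q, hQ⟩ := h2'
      rw [hf] at hP hQ
      have hA : A = MvPolynomial.X 0 * P + MvPolynomial.X 3 * Q := by
        apply mul_left_cancel₀ hf0
        rw [hf]
        linear_combination MvPolynomial.X 0 * hP + MvPolynomial.X 3 * hQ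
      have hB : B = MvPolynomial.X 2 * P - MvPolynomial.X 1 * Q := by
        apply mul_left_cancel₀ hf0
        rw [hf]
        linear_combination MvPolynomial.X 2 * hP - MvPolynomial.X 1 * hQ
      refine ⟨(Ideal.Quotient.mk _ P, Ideal.Quotient.mk _ Q), ?_⟩
      rw [hphi, hA, hB]
      simp [Prod.ext_iff, map_add, map_sub, map_mul]
    · rintro v ⟨p, rfl⟩
      rw [LinearMap.mem_ker, ← LinearMap.comp_apply, hcomp2]
      rfl

end
end
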